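/- arXiv:1011.1355 — 4 statements merged into one kernel-verified Lean document; each statement's English description precedes it below -/
import Mathlib

section
/- Let G be an ε-regular bipartite graph with parts A and B, each of size m, and density d. Then there exist A* ⊆ A and B* ⊆ B with |A*| = |B*| = (1−ε)m such that the restriction G* of G to (A*, B*) is 2ε-regular and every vertex of G* has degree at least (d − 2ε)(1−ε)m, i.e. G* is (2ε, d)-super-regular. -/
set_option maxHeartbeats 1600000

/-- The density of the bipartite graph `G` between the vertex sets `A` and `B`. -/
noncomputable def bidens {α β : Type*} [DecidableEq α] [DecidableEq β]
    (G : Finset (α × β)) (A : Finset α) (B : Finset β) : ℝ :=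
  ((G.filter fun p => p.1 ∈ A ∧ p.2 ∈ B).card : ℝ) / ((A.card : ℝ) * (B.card : ℝ))

open Finset

lemma sum_deg_aux {α β : Type*} [DecidableEq α] [DecidableEq β]
    (G : Finset (α × β)) (B : Finset β) (hG : ∀ p ∈ G, p.2 ∈ B) (S : Finset α) :
    (G.filter fun p => p.1 ∈ S ∧ p.2 ∈ B).card
      = ∑ a ∈ S, (B.filter fun b => (a, b) ∈ G).card := by
  rw [Finset.card_eq_sum_card_fiberwise (f := Prod.fst) (t := S)
    (fun p hp => (Finset.mem_filter.mp hp).2.1)]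
  refine Finset.sum_congr rfl fun a ha => ?_
  refine Finset.card_bij' (fun p _ => p.2) (fun b _ => (a, b)) ?_ ?_ ?_ ?_
  · intro p hp
    simp only [Finset.mem_filter] at hp ⊢
    obtain ⟨⟨hpG, _, hpB⟩, hpa⟩ := hp
    refine ⟨hpB, ?_⟩
    have h : (a, p.2) = p := by rw [← hpa]
    rwa [h]
  · intro b hb
    simp only [Finset.mem_filter] at hb ⊢
    exact ⟨⟨hb.2, ha, hb.1⟩, trivial⟩
  · intro p hp
    simp only [Finset.mem_filter] at hp
    exact Prod.ext hp.2.symm rfl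
  · intro b hb
    rfl

lemma bidens_swap {α β : Type*} [DecidableEq α] [DecidableEq β]
    (G : Finset (α × β)) (S : Finset β) (T : Finset α) :
    bidens (G.image Prod.swap) S T = bidens G T S := by
  unfold bidens
  rw [Finset.filter_image, Finset.card_image_of_injective _ Prod.swap_injective]
  have h : (G.filter fun p => (Prod.swap p).1 ∈ S ∧ (Prod.swap p).2 ∈ T)
      = (G.filter fun p => p.1 ∈ T ∧ p.2 ∈ S) := by
    apply Finset.filter_congr
    intro p _
    simp [Prod.swap, and_comm]
  rw [h, mul_comm]

/-- One-sided key lemma: a set of `m - k` vertices all of degree at least `(d-ε)m`. -/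
lemma main_side {α β : Type*} [DecidableEq α] [DecidableEq β]
    (A : Finset α) (B : Finset β) (G : Finset (α × β)) (hG : G ⊆ A ×ˢ B)
    (m : ℕ) (hA : A.card = m) (hB : B.card = m)
    (ε d : ℝ) (hε0 : 0 < ε)
    (k : ℕ) (hk : (k : ℝ) = ε * m)
    (hreg : ∀ A' ⊆ A, ε * (A.card : ℝ) < (A'.card : ℝ) → |bidens G A' B - d| < ε) :
    ∃ Astar ⊆ A, Astar.card = m - k ∧
      ∀ a ∈ Astar, (d - ε) * m ≤ ((B.filter fun b => (a, b) ∈ G).card : ℝ) := by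
  classical
  set Abad := A.filter fun a => ((B.filter fun b => (a, b) ∈ G).card : ℝ) < (d - ε) * m with hAbad
  have hG2 : ∀ p ∈ G, p.2 ∈ B := fun p hp => (Finset.mem_product.mp (hG hp)).2
  have hbad : Abad.card ≤ k := by
    by_contra hcon
    push_neg at hcon
    have hne : Abad.Nonempty := Finset.card_pos.mp (lt_of_le_of_lt (Nat.zero_le _) hcon)
    have hsubA : Abad ⊆ A := Finset.filter_subset _ _
    have hmpos : 0 < m := by
      have h1 := Finset.card_le_card hsubA
      omega
    have h1 : ε * (A.card : ℝ) < Abad.card := by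
      rw [hA, ← hk]
      exact_mod_cast hcon
    have h2 := hreg Abad hsubA h1
    have hbpos : (0:ℝ) < Abad.card := by
      exact_mod_cast Finset.card_pos.mpr hne
    have hmpos' : (0:ℝ) < m := by exact_mod_cast hmpos
    have hnum : ((G.filter fun p => p.1 ∈ Abad ∧ p.2 ∈ B).card : ℝ)
        < (Abad.card : ℝ) * ((d - ε) * m) := by
      rw [sum_deg_aux G B hG2 Abad]
      push_cast
      calc ∑ a ∈ Abad, ((B.filter fun b => (a, b) ∈ G).card : ℝ)
          < ∑ _a ∈ Abad, (d - ε) * (m : ℝ) := by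
            refine Finset.sum_lt_sum_of_nonempty hne fun a ha => ?_
            exact (Finset.mem_filter.mp ha).2
        _ = (Abad.card : ℝ) * ((d - ε) * m) := by
            rw [Finset.sum_const, nsmul_eq_mul]
    have hlt : bidens G Abad B < d - ε := by
      unfold bidens
      rw [hB, div_lt_iff₀ (by positivity)]
      calc ((G.filter fun p => p.1 ∈ Abad ∧ p.2 ∈ B).card : ℝ)
          < (Abad.card : ℝ) * ((d - ε) * m) := hnum
        _ = (d - ε) * ((Abad.card : ℝ) * m) := by ring
    have := (abs_lt.mp h2).1
    linarith
  have hsubA : Abad ⊆ A := Finset.filter_subset _ _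
  have hc : (A \ Abad).card = m - Abad.card := by
    rw [Finset.card_sdiff_of_subset hsubA, hA]
  have hks : m - k ≤ (A \ Abad).card := by
    omega
  obtain ⟨Astar, hsub, hcard⟩ := Finset.exists_subset_card_eq hks
  refine ⟨Astar, hsub.trans Finset.sdiff_subset, hcard, ?_⟩
  intro a ha
  have hmem := hsub ha
  rw [Finset.mem_sdiff] at hmem
  have hnb := hmem.2
  rw [hAbad, Finset.mem_filter] at hnb
  push_neg at hnb
  exact hnb hmem.1

/-- **Making a regular pair super-regular.** From an `ε`-regular bipartite graph of density `d`
with parts `A`, `B` of size `m` one can delete `εm` vertices from each side to obtain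
`A* ⊆ A`, `B* ⊆ B` of size `(1-ε)m` such that the restriction is `2ε`-regular and every
vertex has degree at least `(d - 2ε)(1-ε)m`, i.e. it is `(2ε, d)`-super-regular. -/
theorem stmt_2 {α β : Type*} [DecidableEq α] [DecidableEq β]
    (A : Finset α) (B : Finset β) (G : Finset (α × β)) (hG : G ⊆ A ×ˢ B)
    (m : ℕ) (hA : A.card = m) (hB : B.card = m)
    (ε d : ℝ) (hε0 : 0 < ε) (hε1 : ε < 1)
    (hd : d = (G.card : ℝ) / ((m : ℝ) * (m : ℝ)))
    (k : ℕ) (hk : (k : ℝ) = ε * (m : ℝ))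
    (hreg : ∀ A' ⊆ A, ∀ B' ⊆ B,
      ε * (A.card : ℝ) < (A'.card : ℝ) → ε * (B.card : ℝ) < (B'.card : ℝ) →
      |bidens G A' B' - d| < ε) :
    ∃ Astar ⊆ A, ∃ Bstar ⊆ B,
      Astar.card = m - k ∧ Bstar.card = m - k ∧
      (∀ A' ⊆ Astar, ∀ B' ⊆ Bstar,
        2 * ε * (Astar.card : ℝ) < (A'.card : ℝ) →
        2 * ε * (Bstar.card : ℝ) < (B'.card : ℝ) →
        |bidens G A' B' - bidens G Astar Bstar| < 2 * ε) ∧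
      (∀ a ∈ Astar,
        (d - 2 * ε) * ((1 - ε) * (m : ℝ)) ≤ ((Bstar.filter fun b => (a, b) ∈ G).card : ℝ)) ∧
      (∀ b ∈ Bstar,
        (d - 2 * ε) * ((1 - ε) * (m : ℝ)) ≤ ((Astar.filter fun a => (a, b) ∈ G).card : ℝ)) := by
  classical
  rcases Nat.eq_zero_or_pos m with hm0 | hm
  · subst hm0
    have hk0 : k = 0 := by
      have h : (k : ℝ) = 0 := by rw [hk]; simp
      exact_mod_cast h
    refine ⟨∅, by simp, ∅, by simp, by simp, by simp, ?_, by simp, by simp⟩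
    intro A' hA' B' hB' h1 h2
    have hA'e : A' = ∅ := Finset.subset_empty.mp hA'
    subst hA'e
    simp at h1
  · have hmR : (0:ℝ) < m := by exact_mod_cast hm
    have hkm : k ≤ m := by
      have h : (k : ℝ) ≤ m := by nlinarith
      exact_mod_cast h
    have hεAB : ε * (m:ℝ) < m := by nlinarith
    obtain ⟨Astar, hAsub, hAcard, hAdeg⟩ := main_side A B G hG m hA hB ε d hε0 k hk
      (fun A' hA' h => hreg A' hA' B subset_rfl h (by rw [hB]; exact hεAB))
    have hGswap : G.image Prod.swap ⊆ B ×ˢ A := by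
      intro p hp
      simp only [Finset.mem_image] at hp
      obtain ⟨q, hq, rfl⟩ := hp
      have h := Finset.mem_product.mp (hG hq)
      simp [Finset.mem_product, h.1, h.2]
    obtain ⟨Bstar, hBsub, hBcard, hBdeg0⟩ := main_side B A (G.image Prod.swap) hGswap
      m hB hA ε d hε0 k hk
      (fun B' hB' h => by
        rw [bidens_swap]
        exact hreg A subset_rfl B' hB' (by rw [hA]; exact hεAB) h)
    have hBdeg : ∀ b ∈ Bstar, (d - ε) * m ≤ ((A.filter fun a => (a, b) ∈ G).card : ℝ) := by
      intro b hb
      have h := hBdeg0 b hb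
      have heq : (A.filter fun a => (b, a) ∈ G.image Prod.swap)
          = A.filter fun a => (a, b) ∈ G := by
        apply Finset.filter_congr
        intro a _
        rw [show ((b, a) : β × α) = Prod.swap (a, b) from rfl,
          Prod.swap_injective.mem_finset_image]
      rwa [heq] at h
    have hAstarR : (Astar.card : ℝ) = (1 - ε) * m := by
      rw [hAcard, Nat.cast_sub hkm, hk]; ring
    have hBstarR : (Bstar.card : ℝ) = (1 - ε) * m := by
      rw [hBcard, Nat.cast_sub hkm, hk]; ring
    refine ⟨Astar, hAsub, Bstar, hBsub, hAcard, hBcard, ?_, ?_, ?_⟩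
    · -- regularity
      intro A' hA' B' hB' h1 h2
      rcases lt_or_ge ε (1/2) with hhalf | hhalf
      · have hA'p : ε * (A.card : ℝ) < A'.card := by
          rw [hA]
          rw [hAstarR] at h1
          nlinarith
        have hB'p : ε * (B.card : ℝ) < B'.card := by
          rw [hB]
          rw [hBstarR] at h2
          nlinarith
        have e1 := hreg A' (hA'.trans hAsub) B' (hB'.trans hBsub) hA'p hB'p
        have e2 := hreg Astar hAsub Bstar hBsub
          (by rw [hA, hAstarR]; nlinarith) (by rw [hB, hBstarR]; nlinarith)
        calc |bidens G A' B' - bidens G Astar Bstar|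
            ≤ |bidens G A' B' - d| + |d - bidens G Astar Bstar| := abs_sub_le _ _ _
          _ < 2 * ε := by rw [abs_sub_comm d]; linarith
      · exfalso
        have hle : (A'.card : ℝ) ≤ Astar.card := by
          exact_mod_cast Finset.card_le_card hA'
        have h0 : (0:ℝ) ≤ (Astar.card : ℝ) := Nat.cast_nonneg _
        nlinarith
    · -- A side degrees
      intro a ha
      have h2 := hAdeg a ha
      have hstep : (B.filter fun b => (a, b) ∈ G).card
          ≤ (Bstar.filter fun b => (a, b) ∈ G).card + k := by
        have hsub2 : (B.filter fun b => (a, b) ∈ G)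
            ⊆ (Bstar.filter fun b => (a, b) ∈ G) ∪ (B \ Bstar) := by
          intro b hb
          rw [Finset.mem_filter] at hb
          by_cases hbs : b ∈ Bstar
          · exact Finset.mem_union_left _ (Finset.mem_filter.mpr ⟨hbs, hb.2⟩)
          · exact Finset.mem_union_right _ (Finset.mem_sdiff.mpr ⟨hb.1, hbs⟩)
        have hcsd : (B \ Bstar).card = k := by
          rw [Finset.card_sdiff_of_subset hBsub, hB, hBcard]; omega
        calc (B.filter fun b => (a, b) ∈ G).card
            ≤ ((Bstar.filter fun b => (a, b) ∈ G) ∪ (B \ Bstar)).card :=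
              Finset.card_le_card hsub2
          _ ≤ (Bstar.filter fun b => (a, b) ∈ G).card + (B \ Bstar).card :=
              Finset.card_union_le _ _
          _ = (Bstar.filter fun b => (a, b) ∈ G).card + k := by rw [hcsd]
      have h3 : ((B.filter fun b => (a, b) ∈ G).card : ℝ)
          ≤ ((Bstar.filter fun b => (a, b) ∈ G).card : ℝ) + k := by exact_mod_cast hstep
      have h4 : (0:ℝ) ≤ ((Bstar.filter fun b => (a, b) ∈ G).card : ℝ) := Nat.cast_nonneg _
      rcases le_or_gt d (2 * ε) with hcase | hcase
      · have h7 : (d - 2 * ε) * ((1 - ε) * m) ≤ 0 :=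
          mul_nonpos_of_nonpos_of_nonneg (by linarith)
            (mul_nonneg (by linarith) hmR.le)
        linarith
      · have h5 : 0 ≤ (d - 2 * ε) * (ε * (m:ℝ)) :=
          mul_nonneg (by linarith) (mul_nonneg hε0.le hmR.le)
        have hexp : (d - 2 * ε) * ((1 - ε) * (m:ℝ))
            = (d - ε) * (m:ℝ) - ε * (m:ℝ) - (d - 2 * ε) * (ε * (m:ℝ)) := by ring
        linarith [h2, h3, h5, hexp, hk]
    · -- B side degrees
      intro b hb
      have h2 := hBdeg b hb
      have hstep : (A.filter fun a => (a, b) ∈ G).card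
          ≤ (Astar.filter fun a => (a, b) ∈ G).card + k := by
        have hsub2 : (A.filter fun a => (a, b) ∈ G)
            ⊆ (Astar.filter fun a => (a, b) ∈ G) ∪ (A \ Astar) := by
          intro a hamem
          rw [Finset.mem_filter] at hamem
          by_cases has : a ∈ Astar
          · exact Finset.mem_union_left _ (Finset.mem_filter.mpr ⟨has, hamem.2⟩)
          · exact Finset.mem_union_right _ (Finset.mem_sdiff.mpr ⟨hamem.1, has⟩)
        have hcsd : (A \ Astar).card = k := by
          rw [Finset.card_sdiff_of_subset hAsub, hA, hAcard]; omega
        calc (A.filter fun a => (a, b) ∈ G).card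
            ≤ ((Astar.filter fun a => (a, b) ∈ G) ∪ (A \ Astar)).card :=
              Finset.card_le_card hsub2
          _ ≤ (Astar.filter fun a => (a, b) ∈ G).card + (A \ Astar).card :=
              Finset.card_union_le _ _
          _ = (Astar.filter fun a => (a, b) ∈ G).card + k := by rw [hcsd]
      have h3 : ((A.filter fun a => (a, b) ∈ G).card : ℝ)
          ≤ ((Astar.filter fun a => (a, b) ∈ G).card : ℝ) + k := by exact_mod_cast hstep
      have h4 : (0:ℝ) ≤ ((Astar.filter fun a => (a, b) ∈ G).card : ℝ) := Nat.cast_nonneg _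
      rcases le_or_gt d (2 * ε) with hcase | hcase
      · have h7 : (d - 2 * ε) * ((1 - ε) * m) ≤ 0 :=
          mul_nonpos_of_nonpos_of_nonneg (by linarith)
            (mul_nonneg (by linarith) hmR.le)
        linarith
      · have h5 : 0 ≤ (d - 2 * ε) * (ε * (m:ℝ)) :=
          mul_nonneg (by linarith) (mul_nonneg hε0.le hmR.le)
        have hexp : (d - 2 * ε) * ((1 - ε) * (m:ℝ))
            = (d - ε) * (m:ℝ) - ε * (m:ℝ) - (d - 2 * ε) * (ε * (m:ℝ)) := by ring
        linarith [h2, h3, h5, hexp, hk]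
end

section
/- Suppose G is a 3-partite graph with parts V_1, V_2, V_3, where each bipartite pair G_{12}, G_{13}, G_{23} is ε-regular with densities d_{12}, d_{13}, d_{23} respectively. Then the number of triangles with one vertex in each part equals d_{12}·d_{13}·d_{23}·|V_1||V_2||V_3| up to an additive error of at most 8ε·|V_1||V_2||V_3|. -/
/-- `ε`-regularity of the bipartite graph `E` between `A` and `B`. -/
def bireg {α β : Type*} [DecidableEq α] [DecidableEq β]
    (A : Finset α) (B : Finset β) (E : Finset (α × β)) (ε : ℝ) : Prop :=
  ∀ A' ⊆ A, ∀ B' ⊆ B,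
    ε * (A.card : ℝ) < (A'.card : ℝ) → ε * (B.card : ℝ) < (B'.card : ℝ) →
    |bidens E A' B' - bidens E A B| < ε

open Finset

lemma aux_filter_card_sum {α β : Type*} [DecidableEq α] [DecidableEq β]
    (E : Finset (α × β)) (A' : Finset α) (B : Finset β) :
    (E.filter fun p => p.1 ∈ A' ∧ p.2 ∈ B).card
      = ∑ a ∈ A', (B.filter fun b => (a, b) ∈ E).card := by
  have h : E.filter (fun p => p.1 ∈ A' ∧ p.2 ∈ B) = (A' ×ˢ B).filter (· ∈ E) := by
    ext p; simp only [mem_filter, mem_product]; tauto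
  rw [h, card_filter, Finset.sum_product]
  refine Finset.sum_congr rfl fun a _ => ?_
  rw [card_filter]

lemma aux_bidens_full {α β : Type*} [DecidableEq α] [DecidableEq β]
    (E : Finset (α × β)) (A : Finset α) (B : Finset β) (h : E ⊆ A ×ˢ B) :
    bidens E A B = (E.card : ℝ) / ((A.card : ℝ) * (B.card : ℝ)) := by
  unfold bidens
  congr 2
  apply congrArg
  apply filter_true_of_mem
  intro p hp
  have := h hp
  rw [mem_product] at this
  exact this

lemma aux_bad_lt {α β : Type*} [DecidableEq α] [DecidableEq β]
    (A A' : Finset α) (B : Finset β) (E : Finset (α × β)) (ε d : ℝ)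
    (hreg : bireg A B E ε) (hε : 0 < ε) (hε1 : ε < 1) (hB : 0 < (B.card : ℝ))
    (hd : bidens E A B = d) (hsub : A' ⊆ A)
    (hall : ∀ a ∈ A', ((B.filter fun b => (a, b) ∈ E).card : ℝ) < (d - ε) * B.card) :
    (A'.card : ℝ) ≤ ε * A.card := by
  by_contra h
  push_neg at h
  have hA' : (0:ℝ) < A'.card := lt_of_le_of_lt (by positivity) h
  have hA'ne : A'.Nonempty := by
    rw [← Finset.card_pos]; exact_mod_cast hA'
  have key := hreg A' hsub B Finset.Subset.rfl h (by nlinarith)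
  rw [hd, abs_lt] at key
  have hsum : ((E.filter fun p => p.1 ∈ A' ∧ p.2 ∈ B).card : ℝ)
      < A'.card * ((d - ε) * B.card) := by
    rw [aux_filter_card_sum]
    push_cast
    calc ∑ a ∈ A', ((B.filter fun b => (a, b) ∈ E).card : ℝ)
        < ∑ _a ∈ A', (d - ε) * B.card := Finset.sum_lt_sum_of_nonempty hA'ne hall
      _ = A'.card * ((d - ε) * B.card) := by rw [Finset.sum_const, nsmul_eq_mul]
  have hb : bidens E A' B < d - ε := by
    unfold bidens
    rw [div_lt_iff₀ (by positivity)]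
    nlinarith
  linarith [key.1]

lemma aux_bad_gt {α β : Type*} [DecidableEq α] [DecidableEq β]
    (A A' : Finset α) (B : Finset β) (E : Finset (α × β)) (ε d : ℝ)
    (hreg : bireg A B E ε) (hε : 0 < ε) (hε1 : ε < 1) (hB : 0 < (B.card : ℝ))
    (hd : bidens E A B = d) (hsub : A' ⊆ A)
    (hall : ∀ a ∈ A', (d + ε) * B.card < ((B.filter fun b => (a, b) ∈ E).card : ℝ)) :
    (A'.card : ℝ) ≤ ε * A.card := by
  by_contra h
  push_neg at h
  have hA' : (0:ℝ) < A'.card := lt_of_le_of_lt (by positivity) h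
  have hA'ne : A'.Nonempty := by
    rw [← Finset.card_pos]; exact_mod_cast hA'
  have key := hreg A' hsub B Finset.Subset.rfl h (by nlinarith)
  rw [hd, abs_lt] at key
  have hsum : A'.card * ((d + ε) * B.card)
      < ((E.filter fun p => p.1 ∈ A' ∧ p.2 ∈ B).card : ℝ) := by
    rw [aux_filter_card_sum]
    push_cast
    calc (A'.card : ℝ) * ((d + ε) * B.card)
        = ∑ _a ∈ A', (d + ε) * B.card := by rw [Finset.sum_const, nsmul_eq_mul]
      _ < ∑ a ∈ A', ((B.filter fun b => (a, b) ∈ E).card : ℝ) :=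
          Finset.sum_lt_sum_of_nonempty hA'ne hall
  have hb : d + ε < bidens E A' B := by
    unfold bidens
    rw [lt_div_iff₀ (by positivity)]
    nlinarith
  linarith [key.2]

lemma aux_prodhi (d12 d13 d23 ε : ℝ) (h120 : 0 ≤ d12) (h121 : d12 ≤ 1)
    (h130 : 0 ≤ d13) (h131 : d13 ≤ 1) (h230 : 0 ≤ d23) (h231 : d23 ≤ 1)
    (hε : 0 < ε) (hε8 : ε < 1/8) :
    (d12 + ε) * (d13 + ε) * (d23 + ε) ≤ d12 * d13 * d23 + 4 * ε := by
  nlinarith [mul_nonneg h120 h130, mul_nonneg h120 h230, mul_nonneg h130 h230,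
    mul_pos hε hε, mul_nonneg (le_of_lt hε) h120, mul_nonneg (le_of_lt hε) h130,
    mul_nonneg (le_of_lt hε) h230,
    mul_nonneg (mul_nonneg (le_of_lt hε) (le_of_lt hε)) (le_of_lt hε)]

lemma aux_prodlo (d12 d13 d23 ε : ℝ) (h120 : 0 ≤ d12) (h121 : d12 ≤ 1)
    (h130 : 0 ≤ d13) (h131 : d13 ≤ 1) (h230 : 0 ≤ d23) (h231 : d23 ≤ 1)
    (hε : 0 < ε) (hε8 : ε < 1/8) :
    d12 * d13 * d23 - 4 * ε ≤ (d12 - ε) * (d13 - ε) * (d23 - ε) := by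
  nlinarith [mul_nonneg h120 h130, mul_nonneg h120 h230, mul_nonneg h130 h230,
    mul_pos hε hε, mul_nonneg (le_of_lt hε) h120, mul_nonneg (le_of_lt hε) h130,
    mul_nonneg (le_of_lt hε) h230,
    mul_nonneg (mul_nonneg (le_of_lt hε) (le_of_lt hε)) (le_of_lt hε)]

lemma aux_alg_lo (D ε x y z : ℝ) (hD1 : D ≤ 1) (hε : 0 < ε)
    (hx : 0 < x) (hy : 0 < y) (hz : 0 < z) :
    (D - 8*ε) * (x*y*z) ≤ ((1 - 2*ε)*x) * ((D - 4*ε)*(y*z)) := by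
  have h : D - 8*ε ≤ (1 - 2*ε)*(D - 4*ε) := by nlinarith
  calc (D - 8*ε)*(x*y*z) ≤ ((1 - 2*ε)*(D - 4*ε))*(x*y*z) :=
        mul_le_mul_of_nonneg_right h (by positivity)
    _ = ((1 - 2*ε)*x)*((D - 4*ε)*(y*z)) := by ring



set_option maxHeartbeats 3000000 in
/-- **Triangle counting lemma.** If the three bipartite graphs of a tripartite graph are
`ε`-regular with densities `d₁₂, d₁₃, d₂₃`, then the number of transversal triangles is
`d₁₂·d₁₃·d₂₃·|V₁||V₂||V₃|` up to an additive error of `8ε|V₁||V₂||V₃|`. -/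
theorem stmt_3 {V1 V2 V3 : Type*} [DecidableEq V1] [DecidableEq V2] [DecidableEq V3]
    (A : Finset V1) (B : Finset V2) (C : Finset V3)
    (G12 : Finset (V1 × V2)) (G13 : Finset (V1 × V3)) (G23 : Finset (V2 × V3))
    (h12 : G12 ⊆ A ×ˢ B) (h13 : G13 ⊆ A ×ˢ C) (h23 : G23 ⊆ B ×ˢ C)
    (ε d12 d13 d23 : ℝ)
    (hd12 : d12 = (G12.card : ℝ) / ((A.card : ℝ) * (B.card : ℝ)))
    (hd13 : d13 = (G13.card : ℝ) / ((A.card : ℝ) * (C.card : ℝ)))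
    (hd23 : d23 = (G23.card : ℝ) / ((B.card : ℝ) * (C.card : ℝ)))
    (hreg12 : bireg A B G12 ε) (hreg13 : bireg A C G13 ε) (hreg23 : bireg B C G23 ε) :
    |(((A ×ˢ B ×ˢ C).filter fun t =>
          (t.1, t.2.1) ∈ G12 ∧ (t.1, t.2.2) ∈ G13 ∧ (t.2.1, t.2.2) ∈ G23).card : ℝ)
        - d12 * d13 * d23 * ((A.card : ℝ) * (B.card : ℝ) * (C.card : ℝ))|
      ≤ 8 * ε * ((A.card : ℝ) * (B.card : ℝ) * (C.card : ℝ)) := by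
  classical
  -- empty part cases
  rcases A.eq_empty_or_nonempty with rfl | hA
  · simp
  rcases B.eq_empty_or_nonempty with rfl | hB
  · simp
  rcases C.eq_empty_or_nonempty with rfl | hC
  · simp
  have hA0 : (0:ℝ) < A.card := by exact_mod_cast Finset.card_pos.2 hA
  have hB0 : (0:ℝ) < B.card := by exact_mod_cast Finset.card_pos.2 hB
  have hC0 : (0:ℝ) < C.card := by exact_mod_cast Finset.card_pos.2 hC
  -- ε must be positive
  rcases le_or_gt ε 0 with hε | hε
  · exfalso
    have h := hreg12 A Finset.Subset.rfl B Finset.Subset.rfl (by nlinarith) (by nlinarith)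
    simp only [sub_self, abs_zero] at h
    linarith
  -- density facts
  have hb12 : bidens G12 A B = d12 := by rw [aux_bidens_full _ _ _ h12, hd12]
  have hb13 : bidens G13 A C = d13 := by rw [aux_bidens_full _ _ _ h13, hd13]
  have hb23 : bidens G23 B C = d23 := by rw [aux_bidens_full _ _ _ h23, hd23]
  have h12c : (G12.card : ℝ) ≤ A.card * B.card := by
    have := Finset.card_le_card h12
    rw [Finset.card_product] at this
    exact_mod_cast this
  have h13c : (G13.card : ℝ) ≤ A.card * C.card := by
    have := Finset.card_le_card h13
    rw [Finset.card_product] at this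
    exact_mod_cast this
  have h23c : (G23.card : ℝ) ≤ B.card * C.card := by
    have := Finset.card_le_card h23
    rw [Finset.card_product] at this
    exact_mod_cast this
  have hd12_0 : 0 ≤ d12 := by rw [hd12]; positivity
  have hd13_0 : 0 ≤ d13 := by rw [hd13]; positivity
  have hd23_0 : 0 ≤ d23 := by rw [hd23]; positivity
  have hd12_1 : d12 ≤ 1 := by rw [hd12, div_le_one (by positivity)]; exact h12c
  have hd13_1 : d13 ≤ 1 := by rw [hd13, div_le_one (by positivity)]; exact h13c
  have hd23_1 : d23 ≤ 1 := by rw [hd23, div_le_one (by positivity)]; exact h23c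
  -- the triangle count
  set T : ℕ := ((A ×ˢ B ×ˢ C).filter fun t =>
      (t.1, t.2.1) ∈ G12 ∧ (t.1, t.2.2) ∈ G13 ∧ (t.2.1, t.2.2) ∈ G23).card with hTdef
  have hTtriv : (T : ℝ) ≤ A.card * B.card * C.card := by
    have h1 : T ≤ (A ×ˢ B ×ˢ C).card := Finset.card_filter_le _ _
    have h2 : (A ×ˢ B ×ˢ C).card = A.card * (B.card * C.card) := by
      rw [Finset.card_product, Finset.card_product]
    rw [h2] at h1
    rw [mul_assoc]
    exact_mod_cast h1
  have hT0 : (0:ℝ) ≤ T := Nat.cast_nonneg T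
  -- large ε : trivial
  have hN0 : (0:ℝ) < (A.card : ℝ) * (B.card : ℝ) * (C.card : ℝ) := by positivity
  have hD1 : d12 * d13 * d23 ≤ 1 := by
    have h1 : d13 * d23 ≤ 1 := mul_le_one₀ hd13_1 hd23_0 hd23_1
    calc d12 * d13 * d23 = d12 * (d13 * d23) := by ring
      _ ≤ 1 * 1 := mul_le_mul hd12_1 h1 (mul_nonneg hd13_0 hd23_0) zero_le_one
      _ = 1 := mul_one _
  have hD0 : 0 ≤ d12 * d13 * d23 := mul_nonneg (mul_nonneg hd12_0 hd13_0) hd23_0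
  rcases le_or_gt (1/8 : ℝ) ε with hεbig | hεsmall
  · rw [abs_le]
    have hDN : d12 * d13 * d23 * ((A.card : ℝ) * (B.card : ℝ) * (C.card : ℝ))
        ≤ (A.card : ℝ) * (B.card : ℝ) * (C.card : ℝ) := by nlinarith
    have hN8 : (A.card : ℝ) * (B.card : ℝ) * (C.card : ℝ)
        ≤ 8 * ε * ((A.card : ℝ) * (B.card : ℝ) * (C.card : ℝ)) := by nlinarith
    constructor
    · nlinarith
    · nlinarith
  -- main case
  set Nb : V1 → Finset V2 := fun a => B.filter fun b => (a, b) ∈ G12 with hNb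
  set Nc : V1 → Finset V3 := fun a => C.filter fun c => (a, c) ∈ G13 with hNc
  set Ta : V1 → ℕ := fun a => (G23.filter fun p => p.1 ∈ Nb a ∧ p.2 ∈ Nc a).card with hTa
  have hTsum : T = ∑ a ∈ A, Ta a := by
    rw [hTdef, Finset.card_filter, Finset.sum_product]
    refine Finset.sum_congr rfl fun a _ => ?_
    rw [← Finset.card_filter]
    congr 1
    ext p
    simp only [Finset.mem_filter, Finset.mem_product, hNb, hNc]
    constructor
    · rintro ⟨⟨hb, hc⟩, h1, h2, h3⟩
      exact ⟨by simpa using h3, ⟨hb, h1⟩, ⟨hc, h2⟩⟩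
    · rintro ⟨hg, ⟨hb, h1⟩, ⟨hc, h2⟩⟩
      have := h23 hg
      rw [Finset.mem_product] at this
      exact ⟨this, h1, h2, by simpa using hg⟩
  have hTale : ∀ a, (Ta a : ℝ) ≤ B.card * C.card := by
    intro a
    have h1 : Ta a ≤ (Nb a ×ˢ Nc a).card := by
      apply Finset.card_le_card
      intro p hp
      rw [Finset.mem_filter] at hp
      rw [Finset.mem_product]
      exact hp.2
    have hb : (Nb a).card ≤ B.card := Finset.card_le_card (Finset.filter_subset _ _)
    have hc : (Nc a).card ≤ C.card := Finset.card_le_card (Finset.filter_subset _ _)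
    rw [Finset.card_product] at h1
    calc (Ta a : ℝ) ≤ ((Nb a).card : ℝ) * (Nc a).card := by exact_mod_cast h1
      _ ≤ B.card * C.card := by
          have b0 : (0:ℝ) ≤ (Nb a).card := by positivity
          have c0 : (0:ℝ) ≤ (Nc a).card := by positivity
          have hb' : ((Nb a).card : ℝ) ≤ B.card := by exact_mod_cast hb
          have hc' : ((Nc a).card : ℝ) ≤ C.card := by exact_mod_cast hc
          exact mul_le_mul hb' hc' c0 (by positivity)
  have hTanb : ∀ a, (Ta a : ℝ) ≤ ((Nb a).card : ℝ) * ((Nc a).card : ℝ) := by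
    intro a
    have h1 : Ta a ≤ (Nb a ×ˢ Nc a).card := by
      apply Finset.card_le_card
      intro p hp
      rw [Finset.mem_filter] at hp
      rw [Finset.mem_product]
      exact hp.2
    rw [Finset.card_product] at h1
    exact_mod_cast h1
  have hNbB : ∀ a, ((Nb a).card : ℝ) ≤ B.card := by
    intro a; exact_mod_cast Finset.card_le_card (Finset.filter_subset _ _)
  have hNcC : ∀ a, ((Nc a).card : ℝ) ≤ C.card := by
    intro a; exact_mod_cast Finset.card_le_card (Finset.filter_subset _ _)
  -- regularity applied to a good vertex
  have hregA : ∀ a, ε * B.card < ((Nb a).card : ℝ) → ε * C.card < ((Nc a).card : ℝ) →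
      |((Ta a : ℝ) / (((Nb a).card : ℝ) * ((Nc a).card : ℝ))) - d23| < ε := by
    intro a hnb hnc
    have key := hreg23 (Nb a) (Finset.filter_subset _ _) (Nc a) (Finset.filter_subset _ _) hnb hnc
    rw [hb23] at key
    have : bidens G23 (Nb a) (Nc a)
        = (Ta a : ℝ) / (((Nb a).card : ℝ) * ((Nc a).card : ℝ)) := by
      simp only [bidens, hTa]
    rwa [this] at key
  -- bad degree sets
  have hBadHi12 : ((A.filter fun a => (d12 + ε) * B.card < ((Nb a).card : ℝ)).card : ℝ)
      ≤ ε * A.card := by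
    refine aux_bad_gt A _ B G12 ε d12 hreg12 hε (by linarith) hB0 hb12
      (Finset.filter_subset _ _) ?_
    intro a ha
    exact (Finset.mem_filter.1 ha).2
  have hBadHi13 : ((A.filter fun a => (d13 + ε) * C.card < ((Nc a).card : ℝ)).card : ℝ)
      ≤ ε * A.card := by
    refine aux_bad_gt A _ C G13 ε d13 hreg13 hε (by linarith) hC0 hb13
      (Finset.filter_subset _ _) ?_
    intro a ha
    exact (Finset.mem_filter.1 ha).2
  have hBadLo12 : ((A.filter fun a => ((Nb a).card : ℝ) < (d12 - ε) * B.card).card : ℝ)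
      ≤ ε * A.card := by
    refine aux_bad_lt A _ B G12 ε d12 hreg12 hε (by linarith) hB0 hb12
      (Finset.filter_subset _ _) ?_
    intro a ha
    exact (Finset.mem_filter.1 ha).2
  have hBadLo13 : ((A.filter fun a => ((Nc a).card : ℝ) < (d13 - ε) * C.card).card : ℝ)
      ≤ ε * A.card := by
    refine aux_bad_lt A _ C G13 ε d13 hreg13 hε (by linarith) hC0 hb13
      (Finset.filter_subset _ _) ?_
    intro a ha
    exact (Finset.mem_filter.1 ha).2
  have hTcast : (T : ℝ) = ∑ a ∈ A, (Ta a : ℝ) := by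
    rw [hTsum]; push_cast; rfl
  rw [abs_le]
  constructor
  · -- lower bound : -(8εN) ≤ T - D·N
    rcases le_or_gt (d12 * d13 * d23) (4 * ε) with hDsmall | hDbig
    · have h1 : d12 * d13 * d23 * ((A.card : ℝ) * B.card * C.card)
          ≤ 4 * ε * ((A.card : ℝ) * B.card * C.card) :=
        mul_le_mul_of_nonneg_right hDsmall (le_of_lt hN0)
      have h2 : (0:ℝ) < ε * ((A.card : ℝ) * B.card * C.card) := mul_pos hε hN0
      linarith
    · have hd12D : d12 * d13 * d23 ≤ d12 := by
        have h1 : d13 * d23 ≤ 1 := mul_le_one₀ hd13_1 hd23_0 hd23_1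
        calc d12 * d13 * d23 = d12 * (d13 * d23) := by ring
          _ ≤ d12 * 1 := mul_le_mul_of_nonneg_left h1 hd12_0
          _ = d12 := mul_one _
      have hd13D : d12 * d13 * d23 ≤ d13 := by
        have h1 : d12 * d23 ≤ 1 := mul_le_one₀ hd12_1 hd23_0 hd23_1
        calc d12 * d13 * d23 = d13 * (d12 * d23) := by ring
          _ ≤ d13 * 1 := mul_le_mul_of_nonneg_left h1 hd13_0
          _ = d13 := mul_one _
      have hd23D : d12 * d13 * d23 ≤ d23 := by
        have h1 : d12 * d13 ≤ 1 := mul_le_one₀ hd12_1 hd13_0 hd13_1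
        calc d12 * d13 * d23 = d23 * (d12 * d13) := by ring
          _ ≤ d23 * 1 := mul_le_mul_of_nonneg_left h1 hd23_0
          _ = d23 := mul_one _
      have hε12 : 4 * ε < d12 := lt_of_lt_of_le hDbig hd12D
      have hε13 : 4 * ε < d13 := lt_of_lt_of_le hDbig hd13D
      have hε23 : 4 * ε < d23 := lt_of_lt_of_le hDbig hd23D
      set Bd : Finset V1 := (A.filter fun a => ((Nb a).card : ℝ) < (d12 - ε) * B.card)
          ∪ (A.filter fun a => ((Nc a).card : ℝ) < (d13 - ε) * C.card) with hBddef
      have hBdA : Bd ⊆ A :=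
        Finset.union_subset (Finset.filter_subset _ _) (Finset.filter_subset _ _)
      have hBdcard : (Bd.card : ℝ) ≤ 2 * ε * A.card := by
        have h := Finset.card_union_le
          (A.filter fun a => ((Nb a).card : ℝ) < (d12 - ε) * B.card)
          (A.filter fun a => ((Nc a).card : ℝ) < (d13 - ε) * C.card)
        have h' : (Bd.card : ℝ) ≤
            ((A.filter fun a => ((Nb a).card : ℝ) < (d12 - ε) * B.card).card : ℝ)
            + ((A.filter fun a => ((Nc a).card : ℝ) < (d13 - ε) * C.card).card : ℝ) := by
          rw [hBddef]; exact_mod_cast h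
        linarith
      have hgood : ∀ a ∈ A \ Bd,
          (d12 * d13 * d23 - 4 * ε) * ((B.card : ℝ) * C.card) ≤ (Ta a : ℝ) := by
        intro a ha
        rw [Finset.mem_sdiff] at ha
        obtain ⟨haA, haBd⟩ := ha
        rw [hBddef, Finset.mem_union] at haBd
        push_neg at haBd
        have hnb : (d12 - ε) * B.card ≤ ((Nb a).card : ℝ) := by
          by_contra hcon; push_neg at hcon
          exact haBd.1 (Finset.mem_filter.2 ⟨haA, hcon⟩)
        have hnc : (d13 - ε) * C.card ≤ ((Nc a).card : ℝ) := by
          by_contra hcon; push_neg at hcon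
          exact haBd.2 (Finset.mem_filter.2 ⟨haA, hcon⟩)
        have hnbpos : ε * B.card < ((Nb a).card : ℝ) := by
          have h := mul_lt_mul_of_pos_right (show ε < d12 - ε by linarith) hB0
          linarith
        have hncpos : ε * C.card < ((Nc a).card : ℝ) := by
          have h := mul_lt_mul_of_pos_right (show ε < d13 - ε by linarith) hC0
          linarith
        have hnb0 : (0:ℝ) < ((Nb a).card : ℝ) := lt_trans (mul_pos hε hB0) hnbpos
        have hnc0 : (0:ℝ) < ((Nc a).card : ℝ) := lt_trans (mul_pos hε hC0) hncpos
        have hreg := hregA a hnbpos hncpos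
        rw [abs_lt] at hreg
        have hTa1 : (d23 - ε) * (((Nb a).card : ℝ) * ((Nc a).card : ℝ)) ≤ (Ta a : ℝ) := by
          have h1 : d23 - ε < (Ta a : ℝ) / (((Nb a).card : ℝ) * ((Nc a).card : ℝ)) := by
            linarith [hreg.1]
          have h2 := (lt_div_iff₀ (mul_pos hnb0 hnc0)).1 h1
          linarith
        have hmm : ((d12 - ε) * B.card) * ((d13 - ε) * C.card)
            ≤ ((Nb a).card : ℝ) * ((Nc a).card : ℝ) := by
          apply mul_le_mul hnb hnc _ (le_of_lt hnb0)
          have : (0:ℝ) < (d13 - ε) * C.card := mul_pos (by linarith) hC0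
          linarith
        have hTa2 : (d23 - ε) * (((d12 - ε) * B.card) * ((d13 - ε) * C.card)) ≤ (Ta a : ℝ) := by
          have := mul_le_mul_of_nonneg_left hmm (by linarith : (0:ℝ) ≤ d23 - ε)
          linarith
        have hprodlo := aux_prodlo d12 d13 d23 ε hd12_0 hd12_1 hd13_0 hd13_1
          hd23_0 hd23_1 hε hεsmall
        calc (d12 * d13 * d23 - 4 * ε) * ((B.card : ℝ) * C.card)
            ≤ ((d12 - ε) * (d13 - ε) * (d23 - ε)) * ((B.card : ℝ) * C.card) := by
              apply mul_le_mul_of_nonneg_right hprodlo (by positivity)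
          _ = (d23 - ε) * (((d12 - ε) * B.card) * ((d13 - ε) * C.card)) := by ring
          _ ≤ (Ta a : ℝ) := hTa2
      have hgs : ((A \ Bd).card : ℝ) * ((d12 * d13 * d23 - 4 * ε) * ((B.card : ℝ) * C.card))
          ≤ ∑ a ∈ A \ Bd, (Ta a : ℝ) := by
        calc ((A \ Bd).card : ℝ) * ((d12 * d13 * d23 - 4 * ε) * ((B.card : ℝ) * C.card))
            = ∑ _a ∈ A \ Bd, (d12 * d13 * d23 - 4 * ε) * ((B.card : ℝ) * C.card) := by
              rw [Finset.sum_const, nsmul_eq_mul]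
          _ ≤ ∑ a ∈ A \ Bd, (Ta a : ℝ) := Finset.sum_le_sum hgood
      have hsub : ∑ a ∈ A \ Bd, (Ta a : ℝ) ≤ ∑ a ∈ A, (Ta a : ℝ) := by
        apply Finset.sum_le_sum_of_subset_of_nonneg (Finset.sdiff_subset)
        intro a _ _; positivity
      have hcardAB : ((A \ Bd).card : ℝ) = (A.card : ℝ) - Bd.card := by
        rw [Finset.card_sdiff_of_subset hBdA]
        have := Finset.card_le_card hBdA
        push_cast [this]
        ring
      have hABd : (1 - 2 * ε) * A.card ≤ ((A \ Bd).card : ℝ) := by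
        rw [hcardAB]; linarith
      have hfin : (d12 * d13 * d23 - 8 * ε) * ((A.card : ℝ) * B.card * C.card)
          ≤ (T : ℝ) := by
        rw [hTcast]
        have hpos : (0:ℝ) ≤ (d12 * d13 * d23 - 4 * ε) * ((B.card : ℝ) * C.card) := by
          have h0 : (0:ℝ) ≤ d12 * d13 * d23 - 4 * ε := by linarith
          positivity
        have step : ((1 - 2 * ε) * A.card) * ((d12 * d13 * d23 - 4 * ε) * ((B.card : ℝ) * C.card))
            ≤ ∑ a ∈ A, (Ta a : ℝ) := by
          calc ((1 - 2 * ε) * A.card) * ((d12 * d13 * d23 - 4 * ε) * ((B.card : ℝ) * C.card))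
              ≤ ((A \ Bd).card : ℝ) * ((d12 * d13 * d23 - 4 * ε) * ((B.card : ℝ) * C.card)) :=
                mul_le_mul_of_nonneg_right hABd hpos
            _ ≤ ∑ a ∈ A \ Bd, (Ta a : ℝ) := hgs
            _ ≤ ∑ a ∈ A, (Ta a : ℝ) := hsub
        have hkey := aux_alg_lo (d12 * d13 * d23) ε (A.card : ℝ) (B.card : ℝ) (C.card : ℝ)
          hD1 hε hA0 hB0 hC0
        linarith
      linarith
  · -- upper bound : T - D·N ≤ 8εN
    set Bd : Finset V1 := (A.filter fun a => (d12 + ε) * B.card < ((Nb a).card : ℝ))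
        ∪ (A.filter fun a => (d13 + ε) * C.card < ((Nc a).card : ℝ)) with hBddef
    have hBdA : Bd ⊆ A :=
      Finset.union_subset (Finset.filter_subset _ _) (Finset.filter_subset _ _)
    have hBdcard : (Bd.card : ℝ) ≤ 2 * ε * A.card := by
      have h := Finset.card_union_le
        (A.filter fun a => (d12 + ε) * B.card < ((Nb a).card : ℝ))
        (A.filter fun a => (d13 + ε) * C.card < ((Nc a).card : ℝ))
      have h' : (Bd.card : ℝ) ≤
          ((A.filter fun a => (d12 + ε) * B.card < ((Nb a).card : ℝ)).card : ℝ)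
          + ((A.filter fun a => (d13 + ε) * C.card < ((Nc a).card : ℝ)).card : ℝ) := by
        rw [hBddef]; exact_mod_cast h
      linarith
    have hprodhi := aux_prodhi d12 d13 d23 ε hd12_0 hd12_1 hd13_0 hd13_1
      hd23_0 hd23_1 hε hεsmall
    have hgood : ∀ a ∈ A \ Bd,
        (Ta a : ℝ) ≤ (d12 * d13 * d23 + 4 * ε) * ((B.card : ℝ) * C.card) := by
      intro a ha
      rw [Finset.mem_sdiff] at ha
      obtain ⟨haA, haBd⟩ := ha
      rw [hBddef, Finset.mem_union] at haBd
      push_neg at haBd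
      have hnb : ((Nb a).card : ℝ) ≤ (d12 + ε) * B.card := by
        by_contra hcon; push_neg at hcon
        exact haBd.1 (Finset.mem_filter.2 ⟨haA, hcon⟩)
      have hnc : ((Nc a).card : ℝ) ≤ (d13 + ε) * C.card := by
        by_contra hcon; push_neg at hcon
        exact haBd.2 (Finset.mem_filter.2 ⟨haA, hcon⟩)
      have hnb0 : (0:ℝ) ≤ ((Nb a).card : ℝ) := Nat.cast_nonneg _
      have hnc0 : (0:ℝ) ≤ ((Nc a).card : ℝ) := Nat.cast_nonneg _
      have hεD : ε ≤ d12 * d13 * d23 + 4 * ε := by linarith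
      rcases le_or_gt ((Nb a).card : ℝ) (ε * B.card) with hsmall | hbig
      · calc (Ta a : ℝ) ≤ ((Nb a).card : ℝ) * ((Nc a).card : ℝ) := hTanb a
          _ ≤ (ε * B.card) * C.card :=
              mul_le_mul hsmall (hNcC a) hnc0 (mul_nonneg (le_of_lt hε) (le_of_lt hB0))
          _ = ε * ((B.card : ℝ) * C.card) := by ring
          _ ≤ (d12 * d13 * d23 + 4 * ε) * ((B.card : ℝ) * C.card) :=
              mul_le_mul_of_nonneg_right hεD (by positivity)
      rcases le_or_gt ((Nc a).card : ℝ) (ε * C.card) with hsmall2 | hbig2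
      · calc (Ta a : ℝ) ≤ ((Nb a).card : ℝ) * ((Nc a).card : ℝ) := hTanb a
          _ ≤ (B.card : ℝ) * (ε * C.card) :=
              mul_le_mul (hNbB a) hsmall2 hnc0 (by positivity)
          _ = ε * ((B.card : ℝ) * C.card) := by ring
          _ ≤ (d12 * d13 * d23 + 4 * ε) * ((B.card : ℝ) * C.card) :=
              mul_le_mul_of_nonneg_right hεD (by positivity)
      have hreg := hregA a hbig hbig2
      rw [abs_lt] at hreg
      have hnb0' : (0:ℝ) < ((Nb a).card : ℝ) := lt_trans (mul_pos hε hB0) hbig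
      have hnc0' : (0:ℝ) < ((Nc a).card : ℝ) := lt_trans (mul_pos hε hC0) hbig2
      have hTa1 : (Ta a : ℝ) < (d23 + ε) * (((Nb a).card : ℝ) * ((Nc a).card : ℝ)) := by
        have h1 : (Ta a : ℝ) / (((Nb a).card : ℝ) * ((Nc a).card : ℝ)) < d23 + ε := by
          linarith [hreg.2]
        have h2 := (div_lt_iff₀ (mul_pos hnb0' hnc0')).1 h1
        linarith
      have hd23e : (0:ℝ) ≤ d23 + ε := by linarith
      have hmm : ((Nb a).card : ℝ) * ((Nc a).card : ℝ)
          ≤ ((d12 + ε) * B.card) * ((d13 + ε) * C.card) :=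
        mul_le_mul hnb hnc hnc0 (mul_nonneg (by linarith) (le_of_lt hB0))
      have hTa2 : (Ta a : ℝ) ≤ (d23 + ε) * (((d12 + ε) * B.card) * ((d13 + ε) * C.card)) := by
        have := mul_le_mul_of_nonneg_left hmm hd23e
        linarith
      calc (Ta a : ℝ)
          ≤ (d23 + ε) * (((d12 + ε) * B.card) * ((d13 + ε) * C.card)) := hTa2
        _ = ((d12 + ε) * (d13 + ε) * (d23 + ε)) * ((B.card : ℝ) * C.card) := by ring
        _ ≤ (d12 * d13 * d23 + 4 * ε) * ((B.card : ℝ) * C.card) :=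
            mul_le_mul_of_nonneg_right hprodhi (by positivity)
    have hgs : ∑ a ∈ A \ Bd, (Ta a : ℝ)
        ≤ (A.card : ℝ) * ((d12 * d13 * d23 + 4 * ε) * ((B.card : ℝ) * C.card)) := by
      calc ∑ a ∈ A \ Bd, (Ta a : ℝ)
          ≤ ∑ _a ∈ A \ Bd, (d12 * d13 * d23 + 4 * ε) * ((B.card : ℝ) * C.card) :=
            Finset.sum_le_sum hgood
        _ = (((A \ Bd).card : ℝ)) * ((d12 * d13 * d23 + 4 * ε) * ((B.card : ℝ) * C.card)) := by
            rw [Finset.sum_const, nsmul_eq_mul]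
        _ ≤ (A.card : ℝ) * ((d12 * d13 * d23 + 4 * ε) * ((B.card : ℝ) * C.card)) := by
            apply mul_le_mul_of_nonneg_right
            · exact_mod_cast Finset.card_le_card (Finset.sdiff_subset)
            · have h0 : (0:ℝ) ≤ d12 * d13 * d23 + 4 * ε := by linarith
              exact mul_nonneg h0 (by positivity)
    have hbs : ∑ a ∈ Bd, (Ta a : ℝ) ≤ 2 * ε * A.card * ((B.card : ℝ) * C.card) := by
      calc ∑ a ∈ Bd, (Ta a : ℝ)
          ≤ ∑ _a ∈ Bd, ((B.card : ℝ) * C.card) := Finset.sum_le_sum fun a _ => hTale a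
        _ = (Bd.card : ℝ) * ((B.card : ℝ) * C.card) := by
            rw [Finset.sum_const, nsmul_eq_mul]
        _ ≤ 2 * ε * A.card * ((B.card : ℝ) * C.card) :=
            mul_le_mul_of_nonneg_right hBdcard (by positivity)
    have hsplit : ∑ a ∈ A, (Ta a : ℝ)
        = ∑ a ∈ A \ Bd, (Ta a : ℝ) + ∑ a ∈ Bd, (Ta a : ℝ) := (Finset.sum_sdiff hBdA).symm
    rw [hTcast, hsplit]
    have h2 : (0:ℝ) < ε * ((A.card : ℝ) * B.card * C.card) := mul_pos hε hN0
    linarith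
end

section
/- Let G be a 3-partite 3-complex on V_1 ∪ V_2 ∪ V_3 whose relative densities all exceed d, with G_{123} ε-regular, where 0 < ε ≪ d. If J ⊆ G is a 2-complex with |J*_{123}| > √ε·|G*_{123}| (where J*_{123} denotes the triangles of J of index 123), then the restriction G[J]_{123} is √ε-regular and its relative density satisfies d_{123}(G[J]) = (1 ± √ε)·d_{123}(G). -/
open Finset

/-- The triangles formed by the three bipartite graphs `G12`, `G13`, `G23`. -/
def tri {V1 V2 V3 : Type} [Fintype V1] [Fintype V2] [Fintype V3]
    [DecidableEq V1] [DecidableEq V2] [DecidableEq V3]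
    (G12 : Finset (V1 × V2)) (G13 : Finset (V1 × V3)) (G23 : Finset (V2 × V3)) :
    Finset (V1 × V2 × V3) :=
  Finset.univ.filter fun t => (t.1, t.2.1) ∈ G12 ∧ (t.1, t.2.2) ∈ G13 ∧ (t.2.1, t.2.2) ∈ G23

/-- `ε`-regularity of the triple part `G123` with respect to the underlying graphs
`G12, G13, G23`: for every subgraph triple spanning more than an `ε`-fraction of the
triangles, the relative density of `G123` on its triangles is within `ε` of the overall
relative density. -/
def triRegular {V1 V2 V3 : Type} [Fintype V1] [Fintype V2] [Fintype V3]
    [DecidableEq V1] [DecidableEq V2] [DecidableEq V3]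
    (G12 : Finset (V1 × V2)) (G13 : Finset (V1 × V3)) (G23 : Finset (V2 × V3))
    (G123 : Finset (V1 × V2 × V3)) (ε : ℝ) : Prop :=
  ∀ J12 ⊆ G12, ∀ J13 ⊆ G13, ∀ J23 ⊆ G23,
    ε * ((tri G12 G13 G23).card : ℝ) < ((tri J12 J13 J23).card : ℝ) →
    |((G123 ∩ tri J12 J13 J23).card : ℝ) / ((tri J12 J13 J23).card : ℝ)
        - (G123.card : ℝ) / ((tri G12 G13 G23).card : ℝ)| ≤ ε

/-- `ε`-regularity of the bipartite graph `E` between `A` and `B` (relative densities of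
large induced subpairs are within `ε` of the overall relative density). -/
def bipRegular {α β : Type} [DecidableEq α] [DecidableEq β]
    (A : Finset α) (B : Finset β) (E : Finset (α × β)) (ε : ℝ) : Prop :=
  ∀ A' ⊆ A, ∀ B' ⊆ B,
    ε * (A.card : ℝ) < (A'.card : ℝ) → ε * (B.card : ℝ) < (B'.card : ℝ) →
    |((E.filter fun p => p.1 ∈ A' ∧ p.2 ∈ B').card : ℝ) / ((A'.card : ℝ) * (B'.card : ℝ))
        - (E.card : ℝ) / ((A.card : ℝ) * (B.card : ℝ))| ≤ ε


private lemma tri_mono {V1 V2 V3 : Type} [Fintype V1] [Fintype V2] [Fintype V3]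
    [DecidableEq V1] [DecidableEq V2] [DecidableEq V3]
    {J12 G12 : Finset (V1 × V2)} {J13 G13 : Finset (V1 × V3)} {J23 G23 : Finset (V2 × V3)}
    (h12 : J12 ⊆ G12) (h13 : J13 ⊆ G13) (h23 : J23 ⊆ G23) :
    tri J12 J13 J23 ⊆ tri G12 G13 G23 := by
  intro t ht
  simp only [tri, Finset.mem_filter, Finset.mem_univ, true_and] at *
  exact ⟨h12 ht.1, h13 ht.2.1, h23 ht.2.2⟩

/-- **Regular restriction for 3-complexes.** Suppose `0 < ε ≪ d`, `G` is a 3-partite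
3-complex on `V1 ∪ V2 ∪ V3` with all relative densities exceeding `d` and `G₁₂₃`
`ε`-regular. If `J ⊆ G` is a 2-complex whose triangle set satisfies
`|J*₁₂₃| > √ε·|G*₁₂₃|`, then the restriction `G[J]₁₂₃` is `√ε`-regular with relative
density `(1 ± √ε)·d₁₂₃(G)`. -/
theorem stmt_11 (d : ℝ) (hd : 0 < d) :
    ∃ ε₀ : ℝ, 0 < ε₀ ∧ ∀ ε : ℝ, 0 < ε → ε < ε₀ →
    ∀ (V1 V2 V3 : Type) [Fintype V1] [Fintype V2] [Fintype V3]
      [DecidableEq V1] [DecidableEq V2] [DecidableEq V3]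
      (G1 : Finset V1) (G2 : Finset V2) (G3 : Finset V3)
      (G12 : Finset (V1 × V2)) (G13 : Finset (V1 × V3)) (G23 : Finset (V2 × V3))
      (G123 : Finset (V1 × V2 × V3)),
      G12 ⊆ G1 ×ˢ G2 → G13 ⊆ G1 ×ˢ G3 → G23 ⊆ G2 ×ˢ G3 →
      G123 ⊆ tri G12 G13 G23 →
      d < (G1.card : ℝ) / (Fintype.card V1 : ℝ) →
      d < (G2.card : ℝ) / (Fintype.card V2 : ℝ) →
      d < (G3.card : ℝ) / (Fintype.card V3 : ℝ) →
      d < (G12.card : ℝ) / ((G1.card : ℝ) * (G2.card : ℝ)) →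
      d < (G13.card : ℝ) / ((G1.card : ℝ) * (G3.card : ℝ)) →
      d < (G23.card : ℝ) / ((G2.card : ℝ) * (G3.card : ℝ)) →
      d < (G123.card : ℝ) / ((tri G12 G13 G23).card : ℝ) →
      triRegular G12 G13 G23 G123 ε →
      ∀ (J1 : Finset V1) (J2 : Finset V2) (J3 : Finset V3)
        (J12 : Finset (V1 × V2)) (J13 : Finset (V1 × V3)) (J23 : Finset (V2 × V3)),
        J1 ⊆ G1 → J2 ⊆ G2 → J3 ⊆ G3 →
        J12 ⊆ G12 → J13 ⊆ G13 → J23 ⊆ G23 →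
        J12 ⊆ J1 ×ˢ J2 → J13 ⊆ J1 ×ˢ J3 → J23 ⊆ J2 ×ˢ J3 →
        Real.sqrt ε * ((tri G12 G13 G23).card : ℝ) < ((tri J12 J13 J23).card : ℝ) →
        triRegular J12 J13 J23 (G123 ∩ tri J12 J13 J23) (Real.sqrt ε) ∧
        |((G123 ∩ tri J12 J13 J23).card : ℝ) / ((tri J12 J13 J23).card : ℝ)
            - (G123.card : ℝ) / ((tri G12 G13 G23).card : ℝ)|
          ≤ Real.sqrt ε * ((G123.card : ℝ) / ((tri G12 G13 G23).card : ℝ)) := by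
  refine ⟨min (1/4) (d^2), lt_min (by norm_num) (by positivity), ?_⟩
  intro ε hε hε0 V1 V2 V3 _ _ _ _ _ _ G1 G2 G3 G12 G13 G23 G123 hG12 hG13 hG23 hG123
    h1 h2 h3 h12 h13 h23 hdG hreg J1 J2 J3 J12 J13 J23 hJ1 hJ2 hJ3 hJ12 hJ13 hJ23
    hJ12' hJ13' hJ23' hbig
  have hε14 : ε < 1/4 := lt_of_lt_of_le hε0 (min_le_left _ _)
  have hεd2 : ε < d^2 := lt_of_lt_of_le hε0 (min_le_right _ _)
  have hsq : Real.sqrt ε ^ 2 = ε := Real.sq_sqrt hε.le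
  have hs0 : 0 < Real.sqrt ε := Real.sqrt_pos.2 hε
  have hshalf : Real.sqrt ε < 1/2 := by nlinarith
  have hsd : Real.sqrt ε < d := by nlinarith
  set cG : ℝ := ((tri G12 G13 G23).card : ℝ) with hcG
  set cJ : ℝ := ((tri J12 J13 J23).card : ℝ) with hcJ
  have hcGnn : 0 ≤ cG := Nat.cast_nonneg _
  have hJbig : ε * cG < cJ := by nlinarith
  have hJclose : |((G123 ∩ tri J12 J13 J23).card : ℝ) / cJ - (G123.card : ℝ) / cG| ≤ ε :=
    hreg J12 hJ12 J13 hJ13 J23 hJ23 hJbig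
  have hdpos : d < (G123.card : ℝ) / cG := hdG
  constructor
  · intro K12 hK12 K13 hK13 K23 hK23 hKbig
    set cK : ℝ := ((tri K12 K13 K23).card : ℝ) with hcK
    have hKbigG : ε * cG < cK := by nlinarith
    have hKclose : |((G123 ∩ tri K12 K13 K23).card : ℝ) / cK - (G123.card : ℝ) / cG| ≤ ε :=
      hreg K12 (hK12.trans hJ12) K13 (hK13.trans hJ13) K23 (hK23.trans hJ23) hKbigG
    have hsub : tri K12 K13 K23 ⊆ tri J12 J13 J23 := tri_mono hK12 hK13 hK23
    have hinter : (G123 ∩ tri J12 J13 J23) ∩ tri K12 K13 K23 = G123 ∩ tri K12 K13 K23 := by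
      rw [Finset.inter_assoc, Finset.inter_eq_right.2 hsub]
    rw [hinter]
    have h2e : 2 * ε ≤ Real.sqrt ε := by nlinarith
    have htriangle := abs_sub_le (((G123 ∩ tri K12 K13 K23).card : ℝ) / cK)
      ((G123.card : ℝ) / cG) (((G123 ∩ tri J12 J13 J23).card : ℝ) / cJ)
    rw [abs_sub_comm ((G123.card : ℝ) / cG)] at htriangle
    linarith
  · have : ε ≤ Real.sqrt ε * ((G123.card : ℝ) / cG) := by
      have h1' : ε = Real.sqrt ε * Real.sqrt ε := (Real.mul_self_sqrt hε.le).symm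
      have h2' : Real.sqrt ε * Real.sqrt ε ≤ Real.sqrt ε * ((G123.card : ℝ) / cG) :=
        mul_le_mul_of_nonneg_left (hsd.le.trans hdpos.le) hs0.le
      linarith
    linarith [hJclose, abs_nonneg (((G123 ∩ tri J12 J13 J23).card : ℝ) / cJ - (G123.card : ℝ) / cG)]
end

section
/- Suppose 0 < ε ≪ ε' ≪ d ≪ 1/k, and G is a k-partite k-complex on V_1 ∪ ⋯ ∪ V_k with all relative densities exceeding d and with G_{[k]} ε-regular. If J ⊆ G is a (k−1)-complex with |J*_{[k]}| > √ε·|G*_{[k]}|, then G[J]_{[k]} is √ε-regular with d_{[k]}(G[J]) = (1 ± √ε)·d_{[k]}(G). -/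
open Finset

/-- The part of the complex `G` (a downward-closed family of partite sets) at the index
set `I`: the members whose index (image under `idx`) is exactly `I`. -/
def cpart {V : Type} [Fintype V] [DecidableEq V] {k : ℕ} (idx : V → Fin k)
    (G : Finset (Finset V)) (I : Finset (Fin k)) : Finset (Finset V) :=
  G.filter fun S => S.image idx = I

/-- The star set `G*_I`: the partite sets of index `I` all of whose proper subsets belong
to `G`. -/
def cstar {V : Type} [Fintype V] [DecidableEq V] {k : ℕ} (idx : V → Fin k)
    (G : Finset (Finset V)) (I : Finset (Fin k)) : Finset (Finset V) :=
  Finset.univ.filter fun S =>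
    S.image idx = I ∧ S.card = I.card ∧ ∀ T ∈ S.powerset, T ≠ S → T ∈ G

/-- The relative density of `G` at index `I`. -/
noncomputable def crdens {V : Type} [Fintype V] [DecidableEq V] {k : ℕ} (idx : V → Fin k)
    (G : Finset (Finset V)) (I : Finset (Fin k)) : ℝ :=
  ((cpart idx G I).card : ℝ) / ((cstar idx G I).card : ℝ)

/-- `G` is a `k`-partite complex: every member is a partite set and `G` is closed under
taking subsets. -/
def cIsComplex {V : Type} [Fintype V] [DecidableEq V] {k : ℕ} (idx : V → Fin k)
    (G : Finset (Finset V)) : Prop :=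
  (∀ S ∈ G, S.card = (S.image idx).card) ∧ ∀ S ∈ G, ∀ T ⊆ S, T ∈ G

/-- `ε`-regularity of the top part `G_{[k]}` of the complex `G`: for every subcomplex `Q`
of `G` without a top part and spanning more than an `ε`-fraction of the star set, the
proportion of members of `G_{[k]}` among `Q*_{[k]}` is within `ε` of `d_{[k]}(G)`. -/
def ctopRegular {V : Type} [Fintype V] [DecidableEq V] {k : ℕ} (idx : V → Fin k)
    (G : Finset (Finset V)) (ε : ℝ) : Prop :=
  ∀ Q : Finset (Finset V), Q ⊆ G → (∀ S ∈ Q, ∀ T ⊆ S, T ∈ Q) →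
    (∀ S ∈ Q, S.image idx ≠ Finset.univ) →
    ε * ((cstar idx G Finset.univ).card : ℝ) < ((cstar idx Q Finset.univ).card : ℝ) →
    |((cpart idx G Finset.univ ∩ cstar idx Q Finset.univ).card : ℝ) /
          ((cstar idx Q Finset.univ).card : ℝ) - crdens idx G Finset.univ| ≤ ε

/-- **Regular restriction for `k`-complexes.** Suppose `0 < ε ≪ ε' ≪ d ≪ 1/k` and `G` is
a `k`-partite `k`-complex with all relative densities exceeding `d` and `G_{[k]}`
`ε`-regular. If `J ⊆ G` is a `(k-1)`-subcomplex with `|J*_{[k]}| > √ε·|G*_{[k]}|`, then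
the restriction `G[J]_{[k]}` is `√ε`-regular with density `(1 ± √ε)·d_{[k]}(G)`. -/
theorem stmt_18 (k : ℕ) (hk : 0 < k) :
    ∃ d₀ : ℝ, 0 < d₀ ∧ ∀ d : ℝ, 0 < d → d < d₀ →
    ∃ ε'₀ : ℝ, 0 < ε'₀ ∧ ∀ ε' : ℝ, 0 < ε' → ε' < ε'₀ →
    ∃ ε₀ : ℝ, 0 < ε₀ ∧ ∀ ε : ℝ, 0 < ε → ε < ε₀ →
    ∀ (V : Type) [Fintype V] [DecidableEq V] (idx : V → Fin k) (G : Finset (Finset V)),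
      cIsComplex idx G →
      (∀ I : Finset (Fin k), I ≠ ∅ → d < crdens idx G I) →
      ctopRegular idx G ε →
      ∀ J : Finset (Finset V), J ⊆ G → (∀ S ∈ J, ∀ T ⊆ S, T ∈ J) →
        (∀ S ∈ J, S.image idx ≠ Finset.univ) →
        Real.sqrt ε * ((cstar idx G Finset.univ).card : ℝ) <
          ((cstar idx J Finset.univ).card : ℝ) →
        (∀ Q : Finset (Finset V), Q ⊆ J → (∀ S ∈ Q, ∀ T ⊆ S, T ∈ Q) →
          (∀ S ∈ Q, S.image idx ≠ Finset.univ) →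
          Real.sqrt ε * ((cstar idx J Finset.univ).card : ℝ) <
            ((cstar idx Q Finset.univ).card : ℝ) →
          |((cpart idx G Finset.univ ∩ cstar idx J Finset.univ ∩
                cstar idx Q Finset.univ).card : ℝ) /
              ((cstar idx Q Finset.univ).card : ℝ) -
            ((cpart idx G Finset.univ ∩ cstar idx J Finset.univ).card : ℝ) /
              ((cstar idx J Finset.univ).card : ℝ)| ≤ Real.sqrt ε) ∧
        |((cpart idx G Finset.univ ∩ cstar idx J Finset.univ).card : ℝ) /
            ((cstar idx J Finset.univ).card : ℝ) - crdens idx G Finset.univ|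
          ≤ Real.sqrt ε * crdens idx G Finset.univ := by

  refine ⟨1, one_pos, fun d hd hd1 => ⟨1, one_pos, fun ε' hε' hε'1 =>
    ⟨min (d^2) (1/4), by positivity, fun ε hε hεlt => ?_⟩⟩⟩
  intro V _ _ idx G hG hdens hreg J hJG hJdown hJtop hJbig
  have hne : Nonempty (Fin k) := ⟨⟨0, hk⟩⟩
  have huniv : (Finset.univ : Finset (Fin k)) ≠ ∅ := Finset.univ_nonempty.ne_empty
  have hdG : d < crdens idx G Finset.univ := hdens _ huniv
  set sε := Real.sqrt ε with hsε
  have hsεpos : 0 < sε := Real.sqrt_pos.mpr hε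
  have hεsq : sε * sε = ε := Real.mul_self_sqrt hε.le
  have hεd : ε < d ^ 2 := lt_of_lt_of_le hεlt (min_le_left _ _)
  have hε4 : ε < 1 / 4 := lt_of_lt_of_le hεlt (min_le_right _ _)
  have hsεd : sε < d := by
    have h := Real.sqrt_lt_sqrt hε.le hεd
    rwa [Real.sqrt_sq hd.le] at h
  have hsεhalf : sε < 1 / 2 := by
    have h := Real.sqrt_lt_sqrt hε.le hε4
    calc sε < Real.sqrt (1 / 4) := h
      _ = 1 / 2 := by
          rw [show (1 : ℝ) / 4 = (1 / 2) ^ 2 by norm_num, Real.sqrt_sq (by norm_num)]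
  have hGstar0 : (0 : ℝ) ≤ ((cstar idx G Finset.univ).card : ℝ) := by positivity
  have hJbig' : ε * ((cstar idx G Finset.univ).card : ℝ)
      < ((cstar idx J Finset.univ).card : ℝ) := by
    refine lt_of_le_of_lt ?_ hJbig
    nlinarith [mul_nonneg (by nlinarith : (0:ℝ) ≤ sε - ε) hGstar0]
  have hregJ := hreg J hJG hJdown hJtop hJbig'
  refine ⟨?_, ?_⟩
  · intro Q hQJ hQdown hQtop hQbig
    have hQsub : cstar idx Q Finset.univ ⊆ cstar idx J Finset.univ := by
      intro S hS
      simp only [cstar, Finset.mem_filter] at hS ⊢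
      exact ⟨hS.1, hS.2.1, hS.2.2.1, fun T hT hTS => hQJ (hS.2.2.2 T hT hTS)⟩
    have hinter : cpart idx G Finset.univ ∩ cstar idx J Finset.univ ∩ cstar idx Q Finset.univ
        = cpart idx G Finset.univ ∩ cstar idx Q Finset.univ := by
      rw [Finset.inter_assoc, Finset.inter_eq_right.mpr hQsub]
    rw [hinter]
    have hQbig' : ε * ((cstar idx G Finset.univ).card : ℝ)
        < ((cstar idx Q Finset.univ).card : ℝ) := by
      nlinarith
    have hregQ := hreg Q (hQJ.trans hJG) hQdown (fun S hS => hJtop S (hQJ hS)) hQbig'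
    have htri := abs_sub_le
      (((cpart idx G Finset.univ ∩ cstar idx Q Finset.univ).card : ℝ) /
        ((cstar idx Q Finset.univ).card : ℝ))
      (crdens idx G Finset.univ)
      (((cpart idx G Finset.univ ∩ cstar idx J Finset.univ).card : ℝ) /
        ((cstar idx J Finset.univ).card : ℝ))
    rw [abs_sub_comm (crdens idx G Finset.univ)] at htri
    nlinarith
  · have : ε ≤ sε * crdens idx G Finset.univ := by nlinarith
    linarith [hregJ]
end
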